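/- arXiv:2207.13314 — 2 statements merged into one kernel-verified Lean document; each statement's English description precedes it below -/
import Mathlib

section
/- For all real a > 0, (1 + 1/a)^(a + 1/2) > e. -/
open Real Finset

/-- The first term of the series `log (1 + a⁻¹) = ∑ 2 / (2k + 1) · (2a + 1)^{-(2k+1)}`,
whose terms are all positive. -/
theorem Real.two_div_two_mul_add_one_lt_log_one_add_inv {a : ℝ} (ha : 0 < a) :
    2 / (2 * a + 1) < log (1 + a⁻¹) := by
  calc 2 / (2 * a + 1)
      < ∑ k ∈ range 2, 2 * (1 / (2 * k + 1)) * (1 / (2 * a + 1)) ^ (2 * k + 1) := by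
        norm_num [sum_range_succ, div_eq_mul_inv]
        positivity
    _ ≤ log (1 + a⁻¹) :=
        sum_le_hasSum (range 2) (fun k _ => by positivity) (hasSum_log_one_add_inv ha)

theorem stmt_1 (a : ℝ) (ha : 0 < a) :
    (1 + 1/a) ^ (a + 1/2) > Real.exp 1 := by
  have hbase : 0 < 1 + 1 / a := by positivity
  rw [gt_iff_lt, rpow_def_of_pos hbase, exp_lt_exp, one_div a]
  calc (1 : ℝ) = (a + 1 / 2) * (2 / (2 * a + 1)) := by field_simp
    _ < (a + 1 / 2) * log (1 + a⁻¹) :=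
      mul_lt_mul_of_pos_left (two_div_two_mul_add_one_lt_log_one_add_inv ha) (by positivity)
    _ = log (1 + a⁻¹) * (a + 1 / 2) := mul_comm _ _
end

section
/- For all integers m, d ≥ 1, the binomial coefficient C(m+d, d) satisfies C(m+d, d) ≥ (1/√8) · √(1/d + 1/m) · (e · √((m/d)^2 + m/d))^d. -/
/-!
Write `n! = s n · √(2n) · (n/e)^n`, where the Stirling sequence `s` decreases to `√π`.
After squaring, `C(m+d, d)² = (s (m+d) / (s m · s d))² · (m+d)^(2(m+d)+1) / (2 m^(2m+1) d^(2d+1))`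
and the bound reduces to two facts: `e^(2d) m^(2m+d) ≤ (m+d)^(2m+d)`, which is
`log (1 + t) ≥ 2t/(2+t)` at `t = d/m`, and `s m · s d ≤ 2√π ≤ 2 s (m+d)`. By monotonicity the
latter only has to be checked on `s 1² = e²/2`, `s 2² = e⁴/16`, `s 3² = 2e⁶/243`, and it holds
as soon as `m + d ≥ 4`; the three cases with `m + d ≤ 3` are checked numerically.
-/

open Real Nat Stirling

lemma exp_two_mul_le_one_add_rpow {x y : ℝ} (hx : 0 < x) (hy : 0 ≤ y) :
    exp (2 * y) ≤ (1 + y / x) ^ (2 * x + y) := by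
  rw [rpow_def_of_pos (by positivity), exp_le_exp]
  have hlog := le_log_one_add_of_nonneg (div_nonneg hy hx.le)
  calc 2 * y = (2 * x + y) * (2 * (y / x) / (y / x + 2)) := by field_simp; ring
    _ ≤ (2 * x + y) * log (1 + y / x) := by gcongr
    _ = log (1 + y / x) * (2 * x + y) := mul_comm _ _

lemma exp_one_pow_mul_pow_le_add_pow {m : ℕ} (hm : 0 < m) (d : ℕ) :
    exp 1 ^ (2 * d) * (m : ℝ) ^ (2 * m + d) ≤ ((m : ℝ) + d) ^ (2 * m + d) := by
  have hm' : (0 : ℝ) < m := by exact_mod_cast hm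
  have key : exp (2 * d) ≤ (1 + d / m : ℝ) ^ (2 * m + d) := by
    exact_mod_cast exp_two_mul_le_one_add_rpow hm' d.cast_nonneg
  calc exp 1 ^ (2 * d) * (m : ℝ) ^ (2 * m + d) = exp (2 * d) * (m : ℝ) ^ (2 * m + d) := by
        rw [← exp_nat_mul]; push_cast; ring_nf
    _ ≤ (1 + d / m : ℝ) ^ (2 * m + d) * (m : ℝ) ^ (2 * m + d) := by gcongr
    _ = ((m : ℝ) + d) ^ (2 * m + d) := by rw [← mul_pow]; field_simp

namespace Stirling

lemma stirlingSeq_sq (n : ℕ) :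
    stirlingSeq n ^ 2 = (n ! : ℝ) ^ 2 * exp 1 ^ (2 * n) / (2 * n ^ (2 * n + 1)) := by
  rcases n.eq_zero_or_pos with rfl | hn
  · simp
  rw [stirlingSeq, div_pow, mul_pow, sq_sqrt (by positivity), ← pow_mul, div_pow]
  field_simp
  ring

lemma stirlingSeq_pos {n : ℕ} (hn : 0 < n) : 0 < stirlingSeq n :=
  (sqrt_pos.2 pi_pos).trans_le (sqrt_pi_le_stirlingSeq hn.ne')

lemma stirlingSeq_sq_le_of_le {k n : ℕ} (hk : 0 < k) (h : k ≤ n) :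
    stirlingSeq n ^ 2 ≤ stirlingSeq k ^ 2 := by
  obtain ⟨j, rfl⟩ := Nat.exists_eq_add_of_lt hk
  obtain ⟨i, rfl⟩ := Nat.exists_eq_add_of_le h
  have hanti : stirlingSeq (j + i + 1) ≤ stirlingSeq (j + 1) := stirlingSeq'_antitone (by omega)
  rw [show 0 + j + 1 + i = j + i + 1 by omega, zero_add]
  exact pow_le_pow_left₀ (stirlingSeq'_pos _).le hanti 2

lemma stirlingSeq_mul_le_two_mul_stirlingSeq_add {m d : ℕ} (hm : 0 < m) (hd : 0 < d)
    (h : 4 ≤ m + d) : stirlingSeq m * stirlingSeq d ≤ 2 * stirlingSeq (m + d) := by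
  wlog hmd : m ≤ d generalizing m d
  · rw [mul_comm, add_comm]
    exact this hd hm (by omega) (by omega)
  have hprod : (stirlingSeq m * stirlingSeq d) ^ 2 ≤ exp 1 ^ 8 / 243 := by
    rw [mul_pow]
    rcases (show m = 1 ∨ 2 ≤ m by omega) with rfl | hm2
    · calc stirlingSeq 1 ^ 2 * stirlingSeq d ^ 2 ≤ stirlingSeq 1 ^ 2 * stirlingSeq 3 ^ 2 :=
            mul_le_mul_of_nonneg_left (stirlingSeq_sq_le_of_le (by norm_num) (by omega))
              (sq_nonneg _)
        _ = exp 1 ^ 8 / 243 := by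
          simp only [stirlingSeq_sq]; norm_num [Nat.factorial, -exp_one_pow]; ring
    · calc stirlingSeq m ^ 2 * stirlingSeq d ^ 2 ≤ stirlingSeq 2 ^ 2 * stirlingSeq 2 ^ 2 :=
            mul_le_mul (stirlingSeq_sq_le_of_le (by norm_num) hm2)
              (stirlingSeq_sq_le_of_le (by norm_num) (by omega)) (sq_nonneg _) (sq_nonneg _)
        _ = exp 1 ^ 8 / 256 := by
          simp only [stirlingSeq_sq]; norm_num [Nat.factorial, -exp_one_pow]; ring
        _ ≤ exp 1 ^ 8 / 243 := by gcongr; norm_num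
  have he : exp 1 ^ 8 ≤ 2.7182818286 ^ 8 := pow_le_pow_left₀ (exp_pos 1).le exp_one_lt_d9.le 8
  have hpi : √π ≤ stirlingSeq (m + d) := sqrt_pi_le_stirlingSeq (by omega)
  have hsq : (stirlingSeq m * stirlingSeq d) ^ 2 ≤ (2 * √π) ^ 2 := by
    rw [mul_pow 2, sq_sqrt pi_pos.le]
    nlinarith [pi_gt_d2]
  have hpos : 0 ≤ stirlingSeq m * stirlingSeq d :=
    mul_nonneg (stirlingSeq_pos hm).le (stirlingSeq_pos hd).le
  exact ((pow_le_pow_iff_left₀ hpos (by positivity) two_ne_zero).mp hsq).trans (by linarith)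

end Stirling

lemma choose_add_sq_eq_stirlingSeq {m d : ℕ} (hm : 0 < m) (hd : 0 < d) :
    ((m + d).choose d : ℝ) ^ 2 = (stirlingSeq (m + d) / (stirlingSeq m * stirlingSeq d)) ^ 2 *
      (((m : ℝ) + d) ^ (2 * (m + d) + 1) / (2 * m ^ (2 * m + 1) * d ^ (2 * d + 1))) := by
  have hfac : ((m + d).choose d : ℝ) * d ! * m ! = (m + d)! := by
    exact_mod_cast by simpa using Nat.choose_mul_factorial_mul_factorial (Nat.le_add_left d m)
  rw [div_pow, mul_pow, stirlingSeq_sq, stirlingSeq_sq, stirlingSeq_sq, ← hfac]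
  push_cast
  field_simp
  ring

noncomputable def binomLowerBound (m d : ℕ) : ℝ :=
  1 / √8 * √(1 / d + 1 / m) * (exp 1 * √((m / d) ^ 2 + m / d)) ^ d

lemma binomLowerBound_sq (m d : ℕ) :
    binomLowerBound m d ^ 2 = (1 / d + 1 / m) * (exp 1 ^ 2 * ((m / d) ^ 2 + m / d)) ^ d / 8 := by
  rw [binomLowerBound, mul_pow, mul_pow, ← pow_mul, mul_comm d 2, pow_mul, mul_pow, div_pow,
    sq_sqrt, sq_sqrt, sq_sqrt]
  · ring
  all_goals positivity

lemma binomLowerBound_le_of_sq_le {m d : ℕ} {x : ℝ} (hx : 0 ≤ x)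
    (h : binomLowerBound m d ^ 2 ≤ x ^ 2) : binomLowerBound m d ≤ x :=
  (pow_le_pow_iff_left₀ (by unfold binomLowerBound; positivity) hx two_ne_zero).mp h

lemma binomLowerBound_le_choose_of_add_le_three {m d : ℕ} (hm : 0 < m) (hd : 0 < d)
    (h : m + d ≤ 3) : binomLowerBound m d ≤ (m + d).choose d := by
  refine binomLowerBound_le_of_sq_le (by positivity) ?_
  have he : exp 1 < 2.7182818286 := exp_one_lt_d9
  have he2 : exp 1 ^ 2 < 7.39 := by nlinarith [exp_pos 1]
  rw [binomLowerBound_sq]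
  have : m ≤ 2 := by omega
  have : d ≤ 2 := by omega
  interval_cases m <;> interval_cases d <;> norm_num [Nat.choose, -exp_one_pow] <;> nlinarith

lemma binomLowerBound_le_choose_of_four_le_add {m d : ℕ} (hm : 0 < m) (hd : 0 < d)
    (h : 4 ≤ m + d) : binomLowerBound m d ≤ (m + d).choose d := by
  refine binomLowerBound_le_of_sq_le (by positivity) ?_
  have hratio : 1 / 2 ≤ stirlingSeq (m + d) / (stirlingSeq m * stirlingSeq d) := by
    rw [le_div_iff₀ (mul_pos (stirlingSeq_pos hm) (stirlingSeq_pos hd))]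
    linarith [stirlingSeq_mul_le_two_mul_stirlingSeq_add hm hd h]
  calc binomLowerBound m d ^ 2
      = exp 1 ^ (2 * d) * (m : ℝ) ^ (2 * m + d) *
          (((m : ℝ) + d) ^ (d + 1) / (8 * m ^ (2 * m + 1) * d ^ (2 * d + 1))) := by
        rw [binomLowerBound_sq, show (1 / d + 1 / m : ℝ) = (m + d) / (m * d) by field_simp,
          show exp 1 ^ 2 * ((m / d) ^ 2 + m / d : ℝ) = exp 1 ^ 2 * m * (m + d) / d ^ 2 by
            field_simp, div_pow, mul_pow, mul_pow, ← pow_mul, ← pow_mul]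
        field_simp; ring
    _ ≤ ((m : ℝ) + d) ^ (2 * m + d) *
          (((m : ℝ) + d) ^ (d + 1) / (8 * m ^ (2 * m + 1) * d ^ (2 * d + 1))) := by
        gcongr; exact exp_one_pow_mul_pow_le_add_pow hm d
    _ = (1 / 2) ^ 2 *
          (((m : ℝ) + d) ^ (2 * (m + d) + 1) / (2 * m ^ (2 * m + 1) * d ^ (2 * d + 1))) := by
        field_simp; ring
    _ ≤ _ := by rw [choose_add_sq_eq_stirlingSeq hm hd]; gcongr

theorem stmt_2 (m d : ℕ) (hm : 1 ≤ m) (hd : 1 ≤ d) :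
    ((m + d).choose d : ℝ) ≥
      (1 / Real.sqrt 8) * Real.sqrt (1/(d:ℝ) + 1/(m:ℝ)) *
        (Real.exp 1 * Real.sqrt (((m:ℝ)/(d:ℝ))^2 + (m:ℝ)/(d:ℝ))) ^ d := by
  rcases le_or_gt (m + d) 3 with h | h
  · exact binomLowerBound_le_choose_of_add_le_three hm hd h
  · exact binomLowerBound_le_choose_of_four_le_add hm hd h
end
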